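/- For any 0 < t_0 < t_1 < ⋯ < t_{n-1}, the reverse Bessel collocation matrix M_r = (B^r_{j-1}(t_{i-1}))_{1≤i,j≤n} is strictly totally positive. -/

import Mathlib

/-!
Write the columns of a minor as functions `y ↦ y ^ l * B_m(y)`. The recurrences
`B₁ = B₀ + y B₀` and `B_{m+2} = (2m+3) B_{m+1} + y² B_m` split such a column into a
nonnegative combination of two columns of the same kind with smaller total `m`, so by
multilinearity of the determinant every minor is a nonnegative combination of generalized
Vandermonde determinants `det (x_i ^ e_j)`. These are positive for `0 < x₀ < x₁ < ⋯` and
`e₀ < e₁ < ⋯`: expanding along the last row gives a polynomial with `k + 1` monomials,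
positive leading coefficient by induction, and roots `x₀, …, x_{k-1}`; Descartes' rule of signs
leaves no room for a root `≥ x_k`.

The splitting is run under three invariants on the exponents `(l j, m j)` of the columns: `l` is
monotone, the degrees `l + m` are increasing (strictly for positivity, weakly for nonnegativity),
and `l j` is even whenever `m j ≠ 0`. The parity condition is what lets a column absorb the factor
`y²` without overtaking a later column of the same degree.
-/

/-- The reverse Bessel polynomial `B^r_m` evaluated at `x`. -/
noncomputable def revBesselPoly (m : ℕ) (x : ℝ) : ℝ :=
  ∑ k ∈ Finset.range (m + 1),
    ((m + k).factorial : ℝ) / (2 ^ k * (m - k).factorial * k.factorial) * x ^ (m - k)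

open Finset Function

namespace Polynomial

theorem signVariations_lt_card_support {R : Type*} [Semiring R] [LinearOrder R] {P : R[X]}
    (hP : P ≠ 0) : P.signVariations < #P.support := by
  have hlen : ((P.coeffList.map SignType.sign).filter (· ≠ 0)).length = #P.support := by
    have hN : P.support = (range P.degree.succ).filter (P.coeff · ≠ 0) := by
      ext n
      simp only [mem_support_iff, mem_filter, mem_range, iff_and_self]
      intro h
      rw [degree_eq_natDegree hP]
      exact Nat.lt_succ_of_le (le_natDegree_of_ne_zero h)
    rw [hN, card_def, filter_val, range_val, Multiset.range, Multiset.filter_coe,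
      Multiset.coe_card, coeffList, List.map_map, List.filter_map, List.length_map,
      ← List.countP_eq_length_filter, List.countP_reverse, List.countP_eq_length_filter]
    congr 2
    ext n
    simp
  have hsub := (List.destutter_sublist (· ≠ ·)
    ((P.coeffList.map SignType.sign).filter (· ≠ 0))).length_le
  have hpos : 0 < #P.support := card_pos.2 (support_nonempty.2 hP)
  unfold signVariations
  omega

theorem card_lt_card_support_of_forall_pos_isRoot {R : Type*} [CommRing R] [LinearOrder R]
    [IsStrictOrderedRing R] {P : R[X]} (hP : P ≠ 0) {s : Finset R}
    (hs : ∀ y ∈ s, 0 < y ∧ P.IsRoot y) : #s < #P.support := by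
  classical
  have hsub : s ⊆ (P.roots.filter (0 < ·)).toFinset := fun y hy => by
    simpa [hP] using (hs y hy).symm
  calc #s ≤ #(P.roots.filter (0 < ·)).toFinset := card_le_card hsub
    _ ≤ P.roots.countP (0 < ·) := by
      rw [Multiset.countP_eq_card_filter]; exact Multiset.toFinset_card_le _
    _ ≤ P.signVariations := roots_countP_pos_le_signVariations P
    _ < #P.support := signVariations_lt_card_support hP

section SparseSum

variable {R ι : Type*} [Semiring R] [Fintype ι] (c : ι → R) (e : ι → ℕ)

theorem coeff_sum_C_mul_X_pow_of_injective (he : e.Injective) (j : ι) :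
    (∑ i, C (c i) * X ^ e i).coeff (e j) = c j := by
  rw [finsetSum_coeff, Fintype.sum_eq_single j fun i hi => ?_, coeff_C_mul_X_pow, if_pos rfl]
  rw [coeff_C_mul_X_pow, if_neg fun h => hi (he h.symm)]

theorem card_support_sum_C_mul_X_pow_le :
    #(∑ i, C (c i) * X ^ e i).support ≤ Fintype.card ι := by
  classical
  refine (card_le_card fun n hn => ?_).trans (card_image_le (s := univ) (f := e))
  by_contra hne
  refine mem_support_iff.1 hn ?_
  rw [finsetSum_coeff]
  refine sum_eq_zero fun i _ => ?_
  rw [coeff_C_mul_X_pow, if_neg fun h => hne (mem_image.2 ⟨i, mem_univ _, h.symm⟩)]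

theorem leadingCoeff_sum_C_mul_X_pow (he : e.Injective) {j : ι} (hj : ∀ i, e i ≤ e j)
    (hc : c j ≠ 0) : (∑ i, C (c i) * X ^ e i).leadingCoeff = c j := by
  have hcoeff := coeff_sum_C_mul_X_pow_of_injective c e he j
  have hdeg : (∑ i, C (c i) * X ^ e i).natDegree = e j :=
    natDegree_eq_of_le_of_coeff_ne_zero
      (natDegree_sum_le_of_forall_le _ _ fun i _ => (natDegree_C_mul_X_pow_le _ _).trans (hj i))
      (hcoeff ▸ hc)
  rw [leadingCoeff, hdeg, hcoeff]

end SparseSum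

theorem eval_pos_of_card_support_le_of_isRoot {P : ℝ[X]} {k : ℕ} (hP : #P.support ≤ k + 1)
    (y : Fin k → ℝ) (hy0 : ∀ i, 0 < y i) (hy : y.Injective) (hroot : ∀ i, P.IsRoot (y i))
    {z : ℝ} (hz0 : 0 < z) (hyz : ∀ i, y i < z) (hlc : 0 < P.leadingCoeff) : 0 < P.eval z := by
  refine zero_lt_eval_of_roots_lt_of_leadingCoeff_nonneg (fun w hw => ?_) hlc.le
  by_contra! hzw
  have hw0 : 0 < w := hz0.trans_le hzw
  have hcard := card_lt_card_support_of_forall_pos_isRoot (leadingCoeff_ne_zero.1 hlc.ne')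
    (s := insert w (univ.image y)) (by
      simp only [mem_insert, mem_image, mem_univ, true_and]
      rintro _ (rfl | ⟨i, rfl⟩)
      exacts [⟨hw0, hw⟩, ⟨hy0 i, hroot i⟩])
  rw [card_insert_of_notMem (by simpa using fun i => ((hyz i).trans_le hzw).ne),
    card_image_of_injective _ hy, card_univ, Fintype.card_fin] at hcard
  omega

end Polynomial

section GeneralizedVandermonde

open Polynomial

theorem Matrix.det_updateRow_last_eq_eval {R : Type*} [CommRing R] {k : ℕ}
    (M : Matrix (Fin (k + 1)) (Fin (k + 1)) R) (e : Fin (k + 1) → ℕ) (z : R) :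
    (M.updateRow (Fin.last k) fun j => z ^ e j).det =
      (∑ j : Fin (k + 1),
        C ((-1) ^ (k + j : ℕ) * (M.submatrix (Fin.last k).succAbove j.succAbove).det) *
          X ^ e j).eval z := by
  rw [det_succ_row _ (Fin.last k), eval_finsetSum]
  refine sum_congr rfl fun j _ => ?_
  simp only [updateRow_self, submatrix_updateRow_succAbove, eval_mul, eval_C, eval_pow, eval_X,
    Fin.val_last]
  ring

theorem det_generalizedVandermonde_pos : ∀ {k : ℕ} (x : Fin k → ℝ) (e : Fin k → ℕ),
    (∀ i, 0 < x i) → StrictMono x → StrictMono e → 0 < (Matrix.of fun i j => x i ^ e j).det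
  | 0, _, _, _, _, _ => by simp
  | k + 1, x, e, hx0, hx, he => by
    set M : Matrix (Fin (k + 1)) (Fin (k + 1)) ℝ := Matrix.of fun i j => x i ^ e j
    set c : Fin (k + 1) → ℝ :=
      fun j => (-1) ^ (k + j : ℕ) * (M.submatrix (Fin.last k).succAbove j.succAbove).det
    have hc : 0 < c (Fin.last k) := by
      simp only [c, Fin.val_last, ← two_mul, pow_mul, neg_one_sq, one_pow, one_mul,
        Fin.succAbove_last]
      exact det_generalizedVandermonde_pos (x ∘ Fin.castSucc) (e ∘ Fin.castSucc)
        (fun _ => hx0 _) (hx.comp Fin.strictMono_castSucc) (he.comp Fin.strictMono_castSucc)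
    have heval : ∀ i, (∑ j, C (c j) * X ^ e j).eval (x i) =
        (M.updateRow (Fin.last k) (M i)).det := fun i =>
      (M.det_updateRow_last_eq_eval e (x i)).symm
    rw [← Matrix.updateRow_eq_self M (Fin.last k), ← heval]
    refine eval_pos_of_card_support_le_of_isRoot
      ((card_support_sum_C_mul_X_pow_le c e).trans_eq (Fintype.card_fin _))
      (x ∘ Fin.castSucc) (fun _ => hx0 _) (hx.injective.comp (Fin.castSucc_injective k))
      (fun i => ?_) (hx0 _) (fun i => hx (Fin.castSucc_lt_last i)) ?_
    · rw [Function.comp_apply, IsRoot, heval]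
      exact Matrix.det_zero_of_row_eq (Fin.castSucc_lt_last i).ne (by simp)
    · rwa [leadingCoeff_sum_C_mul_X_pow c e he.injective (fun i => he.monotone (Fin.le_last i))
        hc.ne']

end GeneralizedVandermonde

section Recurrence

open Nat

theorem revBesselPoly_zero (x : ℝ) : revBesselPoly 0 x = 1 := by
  simp [revBesselPoly]

/-- `revBesselPoly m x = ∑ k, revBesselCoeff m k * x ^ (m - k)`; in this binomial form the
coefficient vanishes for `k > m`, so the sum may run over any `range N` with `m < N`. -/
noncomputable def revBesselCoeff (m k : ℕ) : ℝ :=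
  (m + k).choose (2 * k) * ((2 * k)! / (2 ^ k * k !))

theorem revBesselCoeff_eq_zero {m k : ℕ} (h : m < k) : revBesselCoeff m k = 0 := by
  simp [revBesselCoeff, Nat.choose_eq_zero_of_lt (by omega : m + k < 2 * k)]

theorem revBesselCoeff_zero_right (m : ℕ) : revBesselCoeff m 0 = 1 := by
  simp [revBesselCoeff]

theorem two_mul_add_one_mul_choose_add_three (m k : ℕ) :
    (2 * k + 1) * (m + k + 3).choose (2 * k + 2) =
      (2 * m + 3) * (m + k + 1).choose (2 * k) + (2 * k + 1) * (m + k + 1).choose (2 * k + 2) := by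
  have h := Nat.choose_succ_right_eq (m + k + 1) (2 * k)
  have hpascal : (m + k + 3).choose (2 * k + 2) = (m + k + 1).choose (2 * k) +
      2 * (m + k + 1).choose (2 * k + 1) + (m + k + 1).choose (2 * k + 2) := by
    have h1 : (m + k + 3).choose (2 * k + 2) =
        (m + k + 2).choose (2 * k + 1) + (m + k + 2).choose (2 * k + 2) := Nat.choose_succ_succ ..
    have h2 : (m + k + 2).choose (2 * k + 1) =
        (m + k + 1).choose (2 * k) + (m + k + 1).choose (2 * k + 1) := Nat.choose_succ_succ ..
    have h3 : (m + k + 2).choose (2 * k + 2) =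
        (m + k + 1).choose (2 * k + 1) + (m + k + 1).choose (2 * k + 2) := Nat.choose_succ_succ ..
    omega
  rw [hpascal]
  rcases le_or_gt k (m + 1) with hk | hk
  · obtain ⟨p, hp⟩ := Nat.exists_eq_add_of_le hk
    rw [show m + k + 1 - 2 * k = p by omega] at h
    nlinarith [h, congrArg (· * (m + k + 1).choose (2 * k)) hp]
  · simp [Nat.choose_eq_zero_of_lt (by omega : m + k + 1 < 2 * k),
      Nat.choose_eq_zero_of_lt (by omega : m + k + 1 < 2 * k + 1)]

theorem factorial_two_mul_succ_div (k : ℕ) :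
    ((2 * (k + 1))! / (2 ^ (k + 1) * (k + 1)!) : ℝ) =
      (2 * k + 1) * ((2 * k)! / (2 ^ k * k !)) := by
  rw [show 2 * (k + 1) = 2 * k + 1 + 1 by ring, factorial_succ, factorial_succ, factorial_succ k]
  push_cast
  field_simp
  ring

theorem revBesselCoeff_add_two_succ (m k : ℕ) :
    revBesselCoeff (m + 2) (k + 1) =
      (2 * m + 3) * revBesselCoeff (m + 1) k + revBesselCoeff m (k + 1) := by
  have h := congrArg (fun n : ℕ => (n : ℝ)) (two_mul_add_one_mul_choose_add_three m k)
  push_cast at h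
  simp only [revBesselCoeff, factorial_two_mul_succ_div, show m + 2 + (k + 1) = m + k + 3 by ring,
    show m + 1 + k = m + k + 1 by ring, show m + (k + 1) = m + k + 1 by ring]
  rw [show 2 * (k + 1) = 2 * k + 2 by ring]
  linear_combination ((2 * k)! / (2 ^ k * k !) : ℝ) * h

theorem revBesselPoly_eq_sum_coeff (m : ℕ) (x : ℝ) {N : ℕ} (hN : m < N) :
    revBesselPoly m x = ∑ k ∈ range N, revBesselCoeff m k * x ^ (m - k) := by
  rw [← sum_range_add_sum_Ico _ hN, sum_eq_zero (s := Ico _ N) fun k hk => by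
    rw [revBesselCoeff_eq_zero (mem_Ico.1 hk).1, zero_mul], add_zero]
  refine sum_congr rfl fun k hk => ?_
  have hkm : 2 * k ≤ m + k := by
    have := mem_range.1 hk
    omega
  have hc := Nat.choose_mul_factorial_mul_factorial hkm
  rw [show m + k - 2 * k = m - k by omega] at hc
  rw [revBesselCoeff, ← hc]
  have : (0 : ℝ) < (m - k)! := by positivity
  have : (0 : ℝ) < k ! := by positivity
  push_cast
  field_simp

theorem revBesselPoly_add_two (m : ℕ) (x : ℝ) :
    revBesselPoly (m + 2) x =
      (2 * m + 3) * revBesselPoly (m + 1) x + x ^ 2 * revBesselPoly m x := by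
  have hterm : ∀ k, revBesselCoeff (m + 2) (k + 1) * x ^ (m + 2 - (k + 1)) =
      (2 * m + 3) * (revBesselCoeff (m + 1) k * x ^ (m + 1 - k)) +
        x ^ 2 * (revBesselCoeff m (k + 1) * x ^ (m - (k + 1))) := fun k => by
    rw [revBesselCoeff_add_two_succ, show m + 2 - (k + 1) = m + 1 - k by omega]
    rcases lt_or_ge m (k + 1) with h | h
    · rw [revBesselCoeff_eq_zero h]
      ring
    · rw [show m + 1 - k = m - (k + 1) + 2 by omega, pow_add]
      ring
  rw [revBesselPoly_eq_sum_coeff (m + 2) x (N := m + 3) (by omega), sum_range_succ',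
    revBesselPoly_eq_sum_coeff (m + 1) x (N := m + 2) (by omega),
    revBesselPoly_eq_sum_coeff m x (N := m + 3) (by omega), sum_range_succ' _ (m + 2)]
  simp only [hterm, sum_add_distrib, ← mul_sum, revBesselCoeff_zero_right, Nat.sub_zero]
  ring

/-- For `m = 0` this is `B₁ = B₀ + x B₀`, otherwise the three-term recurrence. -/
theorem revBesselPoly_succ (m : ℕ) (x : ℝ) :
    revBesselPoly (m + 1) x =
      (2 * m + 1) * revBesselPoly m x +
        x ^ min (m + 1) 2 * revBesselPoly (m + 1 - min (m + 1) 2) x := by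
  cases m with
  | zero => norm_num [revBesselPoly, sum_range_succ, add_comm]
  | succ m =>
    rw [revBesselPoly_add_two, show min (m + 1 + 1) 2 = 2 by omega, show m + 1 + 1 - 2 = m by omega]
    push_cast
    ring

end Recurrence

section Collocation

variable {k : ℕ} (x : Fin k → ℝ)

noncomputable def besselCollocation (l m : Fin k → ℕ) : Matrix (Fin k) (Fin k) ℝ :=
  Matrix.of fun i j => x i ^ l j * revBesselPoly (m j) (x i)

theorem besselCollocation_of_forall_eq_zero (l : Fin k → ℕ) {m : Fin k → ℕ}
    (hm : ∀ j, m j = 0) :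
    besselCollocation x l m = Matrix.of fun i j => x i ^ l j := by
  ext i j
  simp [besselCollocation, hm, revBesselPoly_zero]

theorem updateCol_besselCollocation (l m : Fin k → ℕ) (j : Fin k) (a b : ℕ) :
    (besselCollocation x l m).updateCol j (fun i => x i ^ a * revBesselPoly b (x i)) =
      besselCollocation x (update l j a) (update m j b) := by
  ext i j'
  rcases eq_or_ne j' j with rfl | h
  · simp [besselCollocation]
  · simp [besselCollocation, h]

theorem det_besselCollocation_eq_add (l m : Fin k → ℕ) {j : Fin k} {n : ℕ}
    (hn : m j = n + 1) :
    (besselCollocation x l m).det =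
      (2 * n + 1) * (besselCollocation x l (update m j n)).det +
        (besselCollocation x (update l j (l j + min (n + 1) 2))
          (update m j (n + 1 - min (n + 1) 2))).det := by
  set A := besselCollocation x l m
  have hcol : (fun i => A i j) =
      (2 * n + 1 : ℝ) • (fun i => x i ^ l j * revBesselPoly n (x i)) +
      fun i => x i ^ (l j + min (n + 1) 2) * revBesselPoly (n + 1 - min (n + 1) 2) (x i) := by
    ext i
    simp only [A, besselCollocation, Matrix.of_apply, hn, revBesselPoly_succ, Pi.add_apply,
      Pi.smul_apply, smul_eq_mul, pow_add]
    ring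
  rw [← A.updateCol_eq_self j, hcol, Matrix.det_updateCol_add, Matrix.det_updateCol_smul,
    updateCol_besselCollocation, updateCol_besselCollocation, update_eq_self]

end Collocation

theorem Monotone.update {α β : Type*} [PartialOrder α] [Preorder β] [DecidableEq α]
    {f : α → β} (hf : Monotone f) {j : α} {v : β} (h₁ : ∀ i < j, f i ≤ v)
    (h₂ : ∀ i, j < i → v ≤ f i) : Monotone (update f j v) := by
  intro a b hab
  simp only [update_apply]
  split_ifs with ha hb hb
  · exact le_rfl
  · subst ha
    exact h₂ b (lt_of_le_of_ne hab (Ne.symm hb))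
  · subst hb
    exact h₁ a (lt_of_le_of_ne hab ha)
  · exact hf hab

theorem Finset.sum_update_lt_sum {ι M : Type*} [Fintype ι] [DecidableEq ι] [AddCommMonoid M]
    [PartialOrder M] [IsOrderedCancelAddMonoid M] {m : ι → M} {j : ι} {v : M} (hv : v < m j) :
    ∑ i, update m j v i < ∑ i, m i := by
  refine sum_lt_sum (fun i _ => ?_) ⟨j, mem_univ _, by simpa using hv⟩
  by_cases h : i = j
  · simpa [h] using hv.le
  · simp [h]

theorem exists_ne_zero_forall_gt_eq_zero {ι M : Type*} [Fintype ι] [LinearOrder ι] [Zero M]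
    {m : ι → M} (h : ∃ j, m j ≠ 0) : ∃ J, m J ≠ 0 ∧ ∀ i, J < i → m i = 0 := by
  classical
  obtain ⟨j₀, hj₀⟩ := h
  obtain ⟨J, hJ, hJmax⟩ := (univ.filter (m · ≠ 0)).exists_max_image id ⟨j₀, by simpa⟩
  exact ⟨J, (mem_filter.1 hJ).2, fun i hi => by_contra fun h =>
    hi.not_ge (hJmax i (mem_filter.2 ⟨mem_univ _, h⟩))⟩

section ColumnExponents

variable {ι : Type*} [DecidableEq ι] {l m : ι → ℕ} {j : ι} {n : ℕ}

theorem update_add_update_sub {s : ℕ} (hs : s ≤ m j) :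
    update l j (l j + s) + update m j (m j - s) = l + m := by
  ext i
  by_cases h : i = j
  · subst h
    simp only [Pi.add_apply, update_self]
    omega
  · simp [h]

theorem even_of_update_ne_zero (hev : ∀ i, m i ≠ 0 → Even (l i)) (hn : m j = n + 1) :
    ∀ i, update m j n i ≠ 0 → Even (l i) := by
  intro i hi
  refine hev i ?_
  by_cases h : i = j
  · subst h
    omega
  · simpa [h] using hi

theorem even_update_of_update_ne_zero (hev : ∀ i, m i ≠ 0 → Even (l i)) (hn : m j = n + 1) :
    ∀ i, update m j (n + 1 - min (n + 1) 2) i ≠ 0 →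
      Even (update l j (l j + min (n + 1) 2) i) := by
  intro i hi
  by_cases h : i = j
  · subst h
    simp only [update_self] at hi ⊢
    rw [show min (n + 1) 2 = 2 by omega]
    exact (hev i (by omega)).add even_two
  · simp only [update_of_ne h] at hi ⊢
    exact hev i hi

variable [PartialOrder ι]

theorem monotone_add_update_of_lt (hlm : Monotone (l + m)) (hn : m j = n + 1)
    (hlt : ∀ i < j, (l + m) i < (l + m) j) : Monotone (l + update m j n) := by
  have : l + update m j n = update (l + m) j (l j + n) := by
    ext i
    by_cases h : i = j
    · subst h
      simp
    · simp [h]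
  rw [this]
  refine hlm.update (fun i hi => ?_) (fun i hi => ?_)
  · have := hlt i hi
    simp only [Pi.add_apply, hn] at this ⊢
    omega
  · have := hlm hi.le
    simp only [Pi.add_apply, hn] at this ⊢
    omega

theorem monotone_update_add (hl : Monotone l) {s : ℕ} (hs : ∀ i, j < i → l j + s ≤ l i) :
    Monotone (update l j (l j + s)) :=
  hl.update (fun _ hi => (hl hi.le).trans (Nat.le_add_right _ _)) hs

end ColumnExponents

section SplitColumn

variable {ι : Type*} [Fintype ι] [LinearOrder ι] {l m : ι → ℕ}

/-- Column `j` of the family with exponents `(l, m)` can be split by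
`det_besselCollocation_eq_add` so that both new families keep the invariants. -/
def IsSplitColumn (l m : ι → ℕ) (j : ι) (n : ℕ) : Prop :=
  m j = n + 1 ∧ (∀ i < j, (l + m) i < (l + m) j) ∧
    ∀ i, j < i → l j + min (n + 1) 2 ≤ l i

theorem exists_isSplitColumn_of_strictMono (hlm : StrictMono (l + m)) (hm : ∃ j, m j ≠ 0) :
    ∃ j n, IsSplitColumn l m j n := by
  obtain ⟨J, hJ, hJmax⟩ := exists_ne_zero_forall_gt_eq_zero hm
  obtain ⟨n, hn⟩ := Nat.exists_eq_add_one.2 (Nat.pos_of_ne_zero hJ)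
  refine ⟨J, n, hn, fun i hi => hlm hi, fun i hi => ?_⟩
  have h := hlm hi
  simp only [Pi.add_apply, hJmax i hi, hn] at h
  omega

/-- The column to split is the first one of the degree of the last column with `m ≠ 0`. -/
theorem exists_isSplitColumn_of_monotone (hl : Monotone l) (hlm : Monotone (l + m))
    (hev : ∀ j, m j ≠ 0 → Even (l j)) (hinj : ∀ i j, i ≠ j → l i = l j → m i ≠ m j)
    (hm : ∃ j, m j ≠ 0) : ∃ j n, IsSplitColumn l m j n := by
  classical
  obtain ⟨J, hJ, hJmax⟩ := exists_ne_zero_forall_gt_eq_zero hm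
  obtain ⟨j, hj, hjmin⟩ :=
    (univ.filter ((l + m) · = (l + m) J)).exists_min_image id ⟨J, by simp⟩
  simp only [mem_filter, mem_univ, true_and, id] at hj hjmin
  have hjJ : j ≤ J := hjmin J rfl
  obtain ⟨n, hn⟩ : ∃ n, m j = n + 1 := Nat.exists_eq_add_one.2 (by
    have := hl hjJ
    simp only [Pi.add_apply] at hj
    omega)
  refine ⟨j, n, hn, fun i hi => (hlm hi.le).lt_of_ne fun h => hi.not_ge (hjmin i (h.trans hj)),
    fun i hi => ?_⟩
  have hli := hl hi.le
  have hlmi := hlm hi.le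
  simp only [Pi.add_apply] at hj hlmi
  rcases lt_or_ge J i with hJi | hiJ
  · have := hlm hJi.le
    simp only [Pi.add_apply, hJmax i hJi] at this
    omega
  have hlmiJ := hlm hiJ
  simp only [Pi.add_apply] at hlmiJ
  have hne : l i ≠ l j := fun h => hinj i j hi.ne' h (by omega)
  rcases eq_or_ne (m i) 0 with hmi | hmi
  · omega
  obtain ⟨a, ha⟩ := hev i hmi
  obtain ⟨b, hb⟩ := hev j (by omega)
  omega

end SplitColumn

section Positivity

variable {k : ℕ} {x : Fin k → ℝ}

theorem det_besselCollocation_nonneg (hx0 : ∀ i, 0 < x i) (hx : StrictMono x)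
    (l m : Fin k → ℕ) (hl : Monotone l) (hlm : Monotone (l + m))
    (hev : ∀ j, m j ≠ 0 → Even (l j)) : 0 ≤ (besselCollocation x l m).det := by
  by_cases! hdup : ∃ i j, i ≠ j ∧ l i = l j ∧ m i = m j
  · obtain ⟨i, j, hij, hli, hmi⟩ := hdup
    exact (Matrix.det_zero_of_column_eq hij fun r => by simp [besselCollocation, hli, hmi]).ge
  by_cases! hm0 : ∀ j, m j = 0
  · rw [besselCollocation_of_forall_eq_zero x l hm0]
    refine (det_generalizedVandermonde_pos x l hx0 hx
      (hl.strictMono_of_injective fun i j h => ?_)).le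
    by_contra hij
    exact hdup i j hij h (by rw [hm0, hm0])
  obtain ⟨j, n, hn, hlt, hkey⟩ := exists_isSplitColumn_of_monotone hl hlm hev hdup hm0
  rw [det_besselCollocation_eq_add x l m hn]
  refine add_nonneg (mul_nonneg (by positivity) ?_) ?_
  · exact det_besselCollocation_nonneg hx0 hx l (update m j n) hl
      (monotone_add_update_of_lt hlm hn hlt) (even_of_update_ne_zero hev hn)
  · refine det_besselCollocation_nonneg hx0 hx _ _ (monotone_update_add hl hkey) ?_
      (even_update_of_update_ne_zero hev hn)
    rw [← hn, update_add_update_sub (by omega)]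
    exact hlm
termination_by ∑ i, m i
decreasing_by all_goals exact sum_update_lt_sum (by omega)

theorem det_besselCollocation_pos (hx0 : ∀ i, 0 < x i) (hx : StrictMono x)
    (l m : Fin k → ℕ) (hl : Monotone l) (hlm : StrictMono (l + m))
    (hev : ∀ j, m j ≠ 0 → Even (l j)) : 0 < (besselCollocation x l m).det := by
  by_cases! hm0 : ∀ j, m j = 0
  · rw [besselCollocation_of_forall_eq_zero x l hm0]
    rw [show m = 0 from funext hm0, add_zero] at hlm
    exact det_generalizedVandermonde_pos x l hx0 hx hlm
  obtain ⟨j, n, hn, hlt, hkey⟩ := exists_isSplitColumn_of_strictMono hlm hm0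
  rw [det_besselCollocation_eq_add x l m hn]
  refine add_pos_of_nonneg_of_pos (mul_nonneg (by positivity) ?_) ?_
  · exact det_besselCollocation_nonneg hx0 hx l (update m j n) hl
      (monotone_add_update_of_lt hlm.monotone hn hlt) (even_of_update_ne_zero hev hn)
  · refine det_besselCollocation_pos hx0 hx _ _ (monotone_update_add hl hkey) ?_
      (even_update_of_update_ne_zero hev hn)
    rw [← hn, update_add_update_sub (by omega)]
    exact hlm
termination_by ∑ i, m i
decreasing_by exact sum_update_lt_sum (by omega)

end Positivity

theorem revBessel_collocation_STP (n : ℕ) (t : Fin n → ℝ)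
    (hpos : ∀ i, 0 < t i) (hmono : StrictMono t) :
    let M : Matrix (Fin n) (Fin n) ℝ := fun i j => revBesselPoly j (t i)
    ∀ (k : ℕ) (r c : Fin k → Fin n), StrictMono r → StrictMono c →
      0 < (M.submatrix r c).det := by
  intro M k r c hr hc
  have hM : M.submatrix r c = besselCollocation (t ∘ r) 0 fun j => c j := by
    ext i j
    exact (one_mul _).symm
  rw [hM]
  exact det_besselCollocation_pos (fun i => hpos _) (hmono.comp hr) 0 _ monotone_const
    (by rw [zero_add]; exact Fin.val_strictMono.comp hc) fun _ _ => Even.zero
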